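/- Let k be an algebraically closed field of characteristic 0, ζ ∈ k a primitive 3rd root of unity, and c ∈ k a nonzero scalar. Let the 3×3 braiding matrix be q_{11} = −1, q_{12} = −c²ζ, q_{13} = −c⁻³, q_{21} = −c⁻², q_{22} = −1, q_{23} = c, q_{31} = −c³, q_{32} = −c⁻¹ζ, q_{33} = −1 (type ufo(4), fourth Weyl-groupoid object). Then for every λ ∈ k, the quotient of the free algebra k⟨y_1,y_2,y_3⟩ by the two-sided ideal generated by y_1², y_2², y_3², y_{13}, and [[y_{32}, y_{321}]_c, y_2]_c − λ is a nontrivial algebra. -/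

import Mathlib

/-- The `q`-bilinear form `q(α,β) = ∏ i j, (q i j) ^ (α i * β j)` on `ℕⁿ`-degrees. -/
noncomputable def qForm {k : Type*} [Field k] {n : ℕ} (q : Fin n → Fin n → k)
    (α β : Fin n → ℕ) : k :=
  ∏ i : Fin n, ∏ j : Fin n, q i j ^ (α i * β j)

/-- The braided commutator on pairs (homogeneous element, its `ℕⁿ`-degree):
`[u,v]_c = u v − q(deg u, deg v) v u`. -/
noncomputable def bc {k : Type*} [Field k] {n : ℕ} (q : Fin n → Fin n → k)
    (u v : FreeAlgebra k (Fin n) × (Fin n → ℕ)) :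
    FreeAlgebra k (Fin n) × (Fin n → ℕ) :=
  (u.1 * v.1 - qForm q u.2 v.2 • (v.1 * u.1), fun i => u.2 i + v.2 i)

/-- The generator `y i` of the free algebra, together with its degree `e_i`. -/
noncomputable def ygen (k : Type*) [Field k] {n : ℕ} (i : Fin n) :
    FreeAlgebra k (Fin n) × (Fin n → ℕ) :=
  (FreeAlgebra.ι k i, fun j => if j = i then 1 else 0)

/-!
The algebra has a two-dimensional representation: `y₁ ↦ μ E₂₁`, `y₂ ↦ E₁₂`, `y₃ ↦ E₂₁`.
The three generators square to zero there and `y₁`, `y₃` have strictly lower triangular images,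
so `y₁²`, `y₂²`, `y₃²`, `y₁₃` map to zero. Iterating braided commutators of these matrix units
sends `[[y₃₂, y₃₂₁]_c, y₂]_c` to `μ (1 - ζ)(1 + ζ²) · 1 = μ (ζ² - ζ) · 1`, a scalar matrix because
the last braiding scalar is `q(2e₃ + 2e₂ + e₁, e₂) = -1`. Since `ζ² ≠ ζ`, taking
`μ = λ / (ζ² - ζ)` kills the deformed relation too, so the ideal lies in the kernel of a map to
the nonzero algebra of `2 × 2` matrices. In the code, `ygen k i` is `y_{i+1}` and matrix indices
start at `0`.
-/
theorem TwoSidedIdeal.one_notMem_span_of_map_eq_zero {R S F : Type*} [Ring R] [Ring S]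
    [Nontrivial S] [FunLike F R S] [RingHomClass F R S] (f : F) {s : Set R}
    (hs : ∀ x ∈ s, f x = 0) : (1 : R) ∉ span s := fun h1 => by
  have : (1 : R) ∈ ker f := mem_span_iff.1 h1 _ fun x hx => (mem_ker f).2 (hs x hx)
  simp [mem_ker] at this

section BraidedCommutator

variable {k : Type*} [Field k] {n : ℕ} (q : Fin n → Fin n → k)

@[simp] lemma bc_snd (u v : FreeAlgebra k (Fin n) × (Fin n → ℕ)) :
    (bc q u v).2 = u.2 + v.2 := rfl

@[simp] lemma ygen_fst (i : Fin n) : (ygen k i).1 = FreeAlgebra.ι k i := rfl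

@[simp] lemma ygen_snd (i : Fin n) : (ygen k i).2 = Pi.single i 1 := by
  ext j; simp [ygen, Pi.single_apply]

lemma map_bc_fst {A : Type*} [Ring A] [Algebra k A] (φ : FreeAlgebra k (Fin n) →ₐ[k] A)
    (u v : FreeAlgebra k (Fin n) × (Fin n → ℕ)) :
    φ (bc q u v).1 = φ u.1 * φ v.1 - qForm q u.2 v.2 • (φ v.1 * φ u.1) := by
  simp [bc]

lemma qForm_add_left (α β γ : Fin n → ℕ) : qForm q (α + β) γ = qForm q α γ * qForm q β γ := by
  simp only [qForm, Pi.add_apply, add_mul, pow_add, Finset.prod_mul_distrib]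

lemma qForm_add_right (α β γ : Fin n → ℕ) : qForm q α (β + γ) = qForm q α β * qForm q α γ := by
  simp only [qForm, Pi.add_apply, mul_add, pow_add, Finset.prod_mul_distrib]

lemma qForm_single_single (i j : Fin n) : qForm q (Pi.single i 1) (Pi.single j 1) = q i j := by
  simp [qForm, Pi.single_apply, Finset.prod_ite_eq']

end BraidedCommutator

noncomputable def matrixRep {k : Type*} [Field k] (μ : k) :
    FreeAlgebra k (Fin 3) →ₐ[k] Matrix (Fin 2) (Fin 2) k :=
  FreeAlgebra.lift k ![!![0, 0; μ, 0], !![0, 1; 0, 0], !![0, 0; 1, 0]]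

section MatrixRep

variable {k : Type*} [Field k] (q : Fin 3 → Fin 3 → k) (μ : k)

@[simp] lemma matrixRep_ι_zero : matrixRep μ (FreeAlgebra.ι k 0) = !![0, 0; μ, 0] :=
  FreeAlgebra.lift_ι_apply _ _

@[simp] lemma matrixRep_ι_one : matrixRep μ (FreeAlgebra.ι k 1) = !![0, 1; 0, 0] :=
  FreeAlgebra.lift_ι_apply _ _

@[simp] lemma matrixRep_ι_two : matrixRep μ (FreeAlgebra.ι k 2) = !![0, 0; 1, 0] :=
  FreeAlgebra.lift_ι_apply _ _

lemma matrixRep_ι_sq (i : Fin 3) : matrixRep μ (FreeAlgebra.ι k i ^ 2) = 0 := by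
  fin_cases i <;> simp [sq, ← Matrix.of_zero]

lemma matrixRep_bc_zero_two : matrixRep μ (bc q (ygen k 0) (ygen k 2)).1 = 0 := by
  simp [map_bc_fst, ← Matrix.of_zero]

lemma matrixRep_bc_two_one :
    matrixRep μ (bc q (ygen k 2) (ygen k 1)).1 = !![-q 2 1, 0; 0, 1] := by
  simp [map_bc_fst, qForm_single_single]

lemma matrixRep_bc_one_zero :
    matrixRep μ (bc q (ygen k 1) (ygen k 0)).1 = !![μ, 0; 0, -(q 1 0 * μ)] := by
  simp [map_bc_fst, qForm_single_single]

lemma matrixRep_bc_two_bc_one_zero :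
    matrixRep μ (bc q (ygen k 2) (bc q (ygen k 1) (ygen k 0))).1 =
      !![0, 0; μ * (1 + q 2 1 * q 2 0 * q 1 0), 0] := by
  rw [map_bc_fst, matrixRep_bc_one_zero]
  ext i j
  fin_cases i <;> fin_cases j <;> simp [qForm_add_right, qForm_single_single]
  ring

lemma matrixRep_bc_bc_bc :
    matrixRep μ
        (bc q (bc q (ygen k 2) (ygen k 1)) (bc q (ygen k 2) (bc q (ygen k 1) (ygen k 0)))).1 =
      !![0, 0; μ * (1 + q 2 1 * q 2 0 * q 1 0) *
        (1 + q 2 2 * q 2 1 ^ 2 * q 2 0 * q 1 2 * q 1 1 * q 1 0), 0] := by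
  rw [map_bc_fst, matrixRep_bc_two_one, matrixRep_bc_two_bc_one_zero]
  ext i j
  fin_cases i <;> fin_cases j <;> simp [qForm_add_left, qForm_add_right, qForm_single_single]
  ring

lemma matrixRep_bc_bc_bc_bc :
    matrixRep μ (bc q (bc q (bc q (ygen k 2) (ygen k 1))
        (bc q (ygen k 2) (bc q (ygen k 1) (ygen k 0)))) (ygen k 1)).1 =
      (μ * (1 + q 2 1 * q 2 0 * q 1 0) *
        (1 + q 2 2 * q 2 1 ^ 2 * q 2 0 * q 1 2 * q 1 1 * q 1 0)) •
        !![-(q 2 1 ^ 2 * q 1 1 ^ 2 * q 0 1), 0; 0, 1] := by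
  rw [map_bc_fst, matrixRep_bc_bc_bc]
  ext i j
  fin_cases i <;> fin_cases j <;> simp [qForm_add_left, qForm_single_single]
  ring

end MatrixRep

theorem statement_17_general {k : Type*} [Field k]
    (ζ : k) (hζ : IsPrimitiveRoot ζ 3) (c : k) (hc : c ≠ 0)
    (lam : k)
    (q : Fin 3 → Fin 3 → k) (hq : q = ![![-1, -c ^ 2 * ζ, -(c ^ 3)⁻¹], ![-(c ^ 2)⁻¹, -1, c], ![-c ^ 3, -c⁻¹ * ζ, -1]]) :
    (1 : FreeAlgebra k (Fin 3)) ∉ TwoSidedIdeal.span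
      ({FreeAlgebra.ι k (0 : Fin 3) ^ 2,
        FreeAlgebra.ι k (1 : Fin 3) ^ 2,
        FreeAlgebra.ι k (2 : Fin 3) ^ 2,
        (bc q (ygen k 0) (ygen k 2)).1,
        (bc q (bc q (bc q (ygen k 2) (ygen k 1)) (bc q (ygen k 2) (bc q (ygen k 1) (ygen k 0)))) (ygen k 1)).1 - algebraMap k (FreeAlgebra k (Fin 3)) lam} : Set (FreeAlgebra k (Fin 3))) := by
  have hζ3 : ζ ^ 3 = 1 := hζ.pow_eq_one
  have hζ_sub : ζ ^ 2 - ζ ≠ 0 := by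
    rw [sq, ← mul_sub_one]
    exact mul_ne_zero (hζ.ne_zero (by norm_num)) (sub_ne_zero.2 (hζ.ne_one (by norm_num)))
  have hq₁ : q 2 1 * q 2 0 * q 1 0 = -ζ := by simp [hq]; field_simp
  have hq₂ : q 2 2 * q 2 1 ^ 2 * q 2 0 * q 1 2 * q 1 1 * q 1 0 = ζ ^ 2 := by simp [hq]; field_simp
  have hq₃ : q 2 1 ^ 2 * q 1 1 ^ 2 * q 0 1 = -1 := by simp [hq]; field_simp; exact hζ3
  have hlam : lam / (ζ ^ 2 - ζ) * (1 + -ζ) * (1 + ζ ^ 2) = lam := by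
    rw [mul_assoc, show (1 + -ζ) * (1 + ζ ^ 2) = ζ ^ 2 - ζ by linear_combination -hζ3,
      div_mul_cancel₀ _ hζ_sub]
  refine TwoSidedIdeal.one_notMem_span_of_map_eq_zero (matrixRep (lam / (ζ ^ 2 - ζ))) ?_
  simp only [Set.mem_insert_iff, Set.mem_singleton_iff, forall_eq_or_imp, forall_eq]
  refine ⟨matrixRep_ι_sq _ 0, matrixRep_ι_sq _ 1, matrixRep_ι_sq _ 2,
    matrixRep_bc_zero_two q _, ?_⟩
  rw [map_sub, matrixRep_bc_bc_bc_bc, hq₁, hq₂, hq₃, hlam, neg_neg,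
    ← Matrix.one_fin_two, AlgHom.commutes, Algebra.algebraMap_eq_smul_one, sub_self]

theorem statement_17 {k : Type*} [Field k] [IsAlgClosed k] [CharZero k]
    (ζ : k) (hζ : IsPrimitiveRoot ζ 3) (c : k) (hc : c ≠ 0)
    (lam : k)
    (q : Fin 3 → Fin 3 → k) (hq : q = ![![-1, -c ^ 2 * ζ, -(c ^ 3)⁻¹], ![-(c ^ 2)⁻¹, -1, c], ![-c ^ 3, -c⁻¹ * ζ, -1]]) :
    (1 : FreeAlgebra k (Fin 3)) ∉ TwoSidedIdeal.span
      ({FreeAlgebra.ι k (0 : Fin 3) ^ 2,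
        FreeAlgebra.ι k (1 : Fin 3) ^ 2,
        FreeAlgebra.ι k (2 : Fin 3) ^ 2,
        (bc q (ygen k 0) (ygen k 2)).1,
        (bc q (bc q (bc q (ygen k 2) (ygen k 1)) (bc q (ygen k 2) (bc q (ygen k 1) (ygen k 0)))) (ygen k 1)).1 - algebraMap k (FreeAlgebra k (Fin 3)) lam} : Set (FreeAlgebra k (Fin 3))) :=
  statement_17_general ζ hζ c hc lam q hq
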